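/- Let n be an odd positive integer and q = 2^n, and let ∘ denote the symplectic Knuth presemifield multiplication on F_q. For a ∈ F_q, the set {m ∈ F_q : a ∘ (m^{2^{n-1}} + m) + m = 0} has exactly 1 element if a ∈ {0,1}, and exactly 2 elements if a ∉ {0,1}. (This expresses that the set of lines {l_{m^{2^{n-1}}+m, m} : m ∈ F_q} ∪ {l_0, l_1} is a line hyperoval in the symplectic presemifield plane Π(K_n^{td}).) -/

import Mathlib

/-!
Squaring twice clears the square roots: the fourth power of `a ∘ (√m + m) + m` is
`P_a(m) + Tr ((a⁴ + a²) m)` with `P_a(m) = (a + 1)⁴ m⁴ + a⁴ m² + Tr(a) (m² + m)`.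
Both summands are additive, `P_a(1) = 1`, `Tr (a⁴ + a²) = 0`, and the trace only takes
the values `0` and `1`, so `m ↦ m + Tr ((a⁴ + a²) m)` maps the solutions bijectively onto
the zeros of `P_a`.

Those are `{0}` for `a ∈ {0, 1}`. Otherwise they are `{0, (a / (a + 1))²}` if `Tr a = 0`,
and `{0, x₀}` if `Tr a = 1`, where `x₀` is the only root of `x³ + x + (a + 1)⁻⁴`. As `n` is
odd, that root exists in the form `y + y⁻¹`, with `y³` a root of an Artin–Schreier equation
solved by the half-trace, and cube roots exist because `3 ∤ 2ⁿ - 1`. It is unique because a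
second root `x` would give `t² + t = 1 + x₀⁻²` for `t = x / x₀`, whose right-hand side has
trace `1`.
-/

open Finset

-- `(L + T) x = L (x + T x)` because `L` fixes the values `0` and `1` of `T`.
theorem ncard_setOf_add_eq_zero_eq_ncard_setOf_eq_zero {R : Type*} [Ring R] [Finite R]
    (L T : R →+ R) (hL1 : L 1 = 1) (hT1 : T 1 = 0) (hT : ∀ x, T x = 0 ∨ T x = 1) :
    {x | L x + T x = 0}.ncard = {x | L x = 0}.ncard := by
  have hTT : ∀ x, T (T x) = 0 := fun x => by rcases hT x with h | h <;> simp [h, hT1]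
  have hLT : ∀ x, L (T x) = T x := fun x => by rcases hT x with h | h <;> simp [h, hL1]
  have hinj : Function.Injective fun x => x + T x := fun x y h => by
    have hTxy : T x = T y := by simpa [hTT] using congrArg T h
    simpa [hTxy] using h
  have hpre : {x | L x + T x = 0} = (fun x => x + T x) ⁻¹' {x | L x = 0} := by
    ext x; simp [hLT]
  rw [hpre, Set.ncard_preimage_of_injective_subset_range hinj]
  exact fun y _ => Finite.surjective_of_injective hinj y

theorem charP_two_of_card_eq_two_pow {F : Type*} [Field F] [Fintype F] {n : ℕ} (hn : n ≠ 0)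
    (hF : Fintype.card F = 2 ^ n) : CharP F 2 :=
  ringChar.of_eq <| FiniteField.even_card_iff_char_two.mpr <| by
    rw [hF, Nat.pow_mod]; simp [hn]

section CharTwo

variable {R : Type*} [CommRing R] [CharP R 2]

def absTrace (n : ℕ) : R →+ R :=
  AddMonoidHom.mk' (fun x => ∑ i ∈ range n, x ^ 2 ^ i) fun x y => by
    simp only [add_pow_char_pow, sum_add_distrib]

theorem absTrace_apply (n : ℕ) (x : R) : absTrace n x = ∑ i ∈ range n, x ^ 2 ^ i := rfl

theorem absTrace_one {n : ℕ} (hn : Odd n) : absTrace n (1 : R) = 1 := by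
  obtain ⟨k, rfl⟩ := hn
  simp [absTrace_apply, CharTwo.two_eq_zero]

theorem absTrace_sq (n : ℕ) (x : R) : absTrace n (x ^ 2) = absTrace n x ^ 2 := by
  simp only [absTrace_apply, CharTwo.sum_sq, ← pow_mul, mul_comm]

theorem absTrace_sq_add_absTrace (n : ℕ) (x : R) :
    absTrace n x ^ 2 + absTrace n x = x ^ 2 ^ n + x := by
  have h := sum_range_succ (fun i => x ^ 2 ^ i) n
  rw [sum_range_succ'] at h
  simp only [absTrace_apply, CharTwo.sum_sq, ← pow_mul, ← pow_succ]
  linear_combination (norm := (ring_nf; reduce_mod_char!)) h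

def halfTrace (k : ℕ) (c : R) : R := ∑ j ∈ range k, c ^ 2 ^ (2 * j)

theorem halfTrace_sq_add_halfTrace (k : ℕ) (c : R) :
    halfTrace k c ^ 2 + halfTrace k c = absTrace (2 * k) c := by
  simp only [halfTrace]
  induction k with
  | zero => simp [absTrace_apply]
  | succ k ih =>
    rw [sum_range_succ, CharTwo.add_sq, absTrace_apply, mul_add, mul_one, sum_range_succ,
      sum_range_succ, ← absTrace_apply, ← ih, ← pow_mul, ← pow_succ]
    ring

end CharTwo

section FiniteField

variable {F : Type*} [Field F] [Fintype F] {n : ℕ}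

theorem pow_two_pow_pred_sq (hn : n ≠ 0) (hF : Fintype.card F = 2 ^ n) (x : F) :
    (x ^ 2 ^ (n - 1)) ^ 2 = x := by
  rw [← pow_mul, ← pow_succ, Nat.sub_add_cancel (Nat.pos_of_ne_zero hn), ← hF,
    FiniteField.pow_card]

theorem exists_pow_three_eq (hn : Odd n) (hF : Fintype.card F = 2 ^ n) (z : F) :
    ∃ y : F, y ^ 3 = z := by
  classical
  rcases eq_or_ne z 0 with rfl | hz
  · exact ⟨0, by simp⟩
  have hcop : (Nat.card Fˣ).Coprime 3 := by
    obtain ⟨k, rfl⟩ := hn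
    have h4 : 4 ^ k % 3 = 1 := by simp [Nat.pow_mod]
    have hmod : (2 ^ (2 * k + 1) - 1) % 3 = 1 := by
      rw [pow_succ, pow_mul]; norm_num; omega
    rw [Nat.card_eq_fintype_card, Fintype.card_units, hF, Nat.Coprime, Nat.gcd_comm, Nat.gcd_rec,
      hmod, Nat.gcd_one_left]
  obtain ⟨u, hu⟩ := hcop.pow_left_bijective.2 (Units.mk0 z hz)
  exact ⟨u, by simpa using congrArg Units.val hu⟩

variable [CharP F 2]

theorem sq_absTrace (hF : Fintype.card F = 2 ^ n) (x : F) :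
    absTrace n x ^ 2 = absTrace n x := by
  have h := absTrace_sq_add_absTrace n x
  rw [← hF, FiniteField.pow_card, CharTwo.add_self_eq_zero] at h
  linear_combination (norm := (ring_nf; reduce_mod_char!)) h

theorem absTrace_eq_zero_or_one (hF : Fintype.card F = 2 ^ n) (x : F) :
    absTrace n x = 0 ∨ absTrace n x = 1 := by
  have h : absTrace n x * (absTrace n x - 1) = 0 := by
    linear_combination sq_absTrace hF x
  simpa [sub_eq_zero] using h

theorem absTrace_sq_of_card (hF : Fintype.card F = 2 ^ n) (x : F) :
    absTrace n (x ^ 2) = absTrace n x := by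
  rw [absTrace_sq, sq_absTrace hF]

theorem exists_sq_add_eq_of_absTrace_eq_zero (hn : Odd n) (hF : Fintype.card F = 2 ^ n)
    {c : F} (hc : absTrace n c = 0) : ∃ w : F, w ^ 2 + w = c := by
  obtain ⟨k, rfl⟩ := hn
  refine ⟨halfTrace (k + 1) c, ?_⟩
  rw [halfTrace_sq_add_halfTrace, absTrace_apply, show 2 * (k + 1) = 2 * k + 1 + 1 by ring,
    sum_range_succ, ← absTrace_apply, hc, ← hF, FiniteField.pow_card, zero_add]

theorem absTrace_inv_eq_of_cubic_root (hF : Fintype.card F = 2 ^ n) {b x : F} (hb : b ≠ 0)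
    (hx : x ^ 3 + x + b = 0) : absTrace n x⁻¹ = absTrace n b⁻¹ := by
  have hb' : b = x * (x + 1) ^ 2 := by
    linear_combination (norm := (ring_nf; reduce_mod_char!)) hx
  have hx0 : x ≠ 0 := by rintro rfl; exact hb (by simpa using hb')
  have hx1 : x + 1 ≠ 0 := fun h => hb (by rw [hb', h]; ring)
  have hinv : b⁻¹ = x⁻¹ + (x + 1)⁻¹ + (x + 1)⁻¹ ^ 2 := by
    rw [hb']; field_simp; ring_nf; reduce_mod_char!
  rw [hinv, map_add, map_add, absTrace_sq_of_card hF, add_assoc, CharTwo.add_self_eq_zero,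
    add_zero]

theorem cubic_root_unique (hn : Odd n) (hF : Fintype.card F = 2 ^ n) {b x y : F} (hb : b ≠ 0)
    (htr : absTrace n b⁻¹ = 0) (hx : x ^ 3 + x + b = 0) (hy : y ^ 3 + y + b = 0) : x = y := by
  by_contra hxy
  have hy0 : y ≠ 0 := by rintro rfl; exact hb (by simpa using hy)
  have hquad : x ^ 2 + x * y + y ^ 2 + 1 = 0 := by
    have h : (x - y) * (x ^ 2 + x * y + y ^ 2 + 1) = 0 := by linear_combination hx - hy
    exact (mul_eq_zero.1 h).resolve_left (sub_ne_zero.2 hxy)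
  have hratio : (x / y) ^ 2 + x / y = 1 + y⁻¹ ^ 2 := by
    field_simp
    linear_combination (norm := (ring_nf; reduce_mod_char!)) hquad
  have h := congrArg (absTrace n) hratio
  rw [map_add, absTrace_sq_of_card hF, CharTwo.add_self_eq_zero, map_add, absTrace_one hn,
    absTrace_sq_of_card hF, absTrace_inv_eq_of_cubic_root hF hb hy, htr, add_zero] at h
  exact zero_ne_one h

theorem exists_cubic_root (hn : Odd n) (hF : Fintype.card F = 2 ^ n) {b : F} (hb : b ≠ 0)
    (htr : absTrace n b⁻¹ = 0) : ∃ x : F, x ^ 3 + x + b = 0 := by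
  obtain ⟨w, hw⟩ := exists_sq_add_eq_of_absTrace_eq_zero hn hF (c := b⁻¹ ^ 2)
    (by rw [absTrace_sq_of_card hF, htr])
  have hw' : (b * w) ^ 2 + b * (b * w) = 1 := by
    rw [mul_pow, ← mul_assoc, ← sq, ← mul_add, hw]; field_simp
  obtain ⟨y, hy⟩ := exists_pow_three_eq hn hF (b * w)
  have hbw : b * w ≠ 0 := by rintro h; simp [h] at hw'
  have hy0 : y ≠ 0 := by rintro rfl; exact hbw (by simpa using hy.symm)
  refine ⟨y + y⁻¹, ?_⟩
  field_simp
  linear_combination (norm := (ring_nf; reduce_mod_char!)) (y ^ 3 + b * w + b) * hy + hw'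

end FiniteField

section Knuth

variable {R : Type*} [CommRing R] [CharP R 2]

def knuthMul (n : ℕ) (x y : R) : R :=
  x * y + absTrace n x * y ^ 2 ^ (n - 1) + absTrace n (x ^ 2 * y)

-- The fourth power of the additive part of `m ↦ a ∘ (√m + m) + m`.
def knuthQuartic (n : ℕ) (a : R) : R →+ R :=
  AddMonoidHom.mk' (fun m => (a + 1) ^ 4 * m ^ 4 + a ^ 4 * m ^ 2 + absTrace n a * (m ^ 2 + m))
    fun x y => by ring_nf; reduce_mod_char!

theorem knuthQuartic_apply (n : ℕ) (a m : R) :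
    knuthQuartic n a m = (a + 1) ^ 4 * m ^ 4 + a ^ 4 * m ^ 2 + absTrace n a * (m ^ 2 + m) := rfl

theorem knuthQuartic_one (n : ℕ) (a : R) : knuthQuartic n a 1 = 1 := by
  rw [knuthQuartic_apply]; ring_nf; reduce_mod_char!

end Knuth

section KnuthField

variable {F : Type*} [Field F] [CharP F 2] {n : ℕ}

theorem knuthQuartic_eq_zero_iff_of_eq_zero_or_one (hn : Odd n) {a m : F} (ha : a = 0 ∨ a = 1) :
    knuthQuartic n a m = 0 ↔ m = 0 := by
  rcases ha with rfl | rfl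
  · simp [knuthQuartic_apply]
  · have h1 : knuthQuartic n (1 : F) m = m := by
      rw [knuthQuartic_apply, absTrace_one hn]; ring_nf; reduce_mod_char!
    rw [h1]

theorem ncard_setOf_knuthQuartic_eq_zero_of_absTrace_eq_zero {a : F} (ha0 : a ≠ 0) (ha1 : a ≠ 1)
    (ht : absTrace n a = 0) : {m | knuthQuartic n a m = 0}.ncard = 2 := by
  have ha1' : a + 1 ≠ 0 := fun h => ha1 (CharTwo.add_eq_zero.1 h)
  have hP : ∀ m, knuthQuartic n a m = ((a + 1) ^ 2 * (m * (m - (a / (a + 1)) ^ 2))) ^ 2 := by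
    intro m; rw [knuthQuartic_apply, ht]; field_simp; ring_nf; reduce_mod_char!
  have hzeros : {m | knuthQuartic n a m = 0} = {0, (a / (a + 1)) ^ 2} := by
    ext m; simp [hP, ha1', sub_eq_zero]
  rw [hzeros, Set.ncard_pair (pow_ne_zero 2 (div_ne_zero ha0 ha1')).symm]

variable [Fintype F]

theorem knuthMul_sqrt_add_add_pow_four (hn : n ≠ 0) (hF : Fintype.card F = 2 ^ n) (a m : F) :
    (knuthMul n a (m ^ 2 ^ (n - 1) + m) + m) ^ 4 =
      knuthQuartic n a m + absTrace n ((a ^ 4 + a ^ 2) * m) := by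
  set s := m ^ 2 ^ (n - 1)
  set r := s ^ 2 ^ (n - 1)
  have hs : s ^ 2 = m := pow_two_pow_pred_sq hn hF m
  have hr : r ^ 2 = s := pow_two_pow_pred_sq hn hF s
  have hsqrt : (s + m) ^ 2 ^ (n - 1) = r + s := add_pow_char_pow ..
  have htr : absTrace n (a ^ 2 * (s + m)) = absTrace n ((a ^ 4 + a ^ 2) * m) := by
    rw [mul_add, map_add, ← absTrace_sq_of_card hF (a ^ 2 * s), mul_pow, hs, ← map_add]
    congr 1; ring
  rw [knuthMul, hsqrt, htr, knuthQuartic_apply]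
  set t := absTrace n a
  set ε := absTrace n ((a ^ 4 + a ^ 2) * m)
  rw [show 4 = 2 ^ 2 by norm_num]
  simp only [add_pow_char_pow, mul_pow]
  have ht : t ^ 2 = t := sq_absTrace hF a
  have hε : ε ^ 2 = ε := sq_absTrace hF _
  linear_combination (a ^ 4 + t ^ 4) * (s ^ 2 + m) * hs + t ^ 4 * ((r ^ 2 + s) * hr + hs) +
      (t ^ 2 + t + 1) * (m ^ 2 + m) * ht + (ε ^ 2 + ε + 1) * hε

theorem ncard_setOf_knuthMul_sqrt_add_add_eq_zero (hn : n ≠ 0) (hF : Fintype.card F = 2 ^ n)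
    (a : F) :
    {m : F | knuthMul n a (m ^ 2 ^ (n - 1) + m) + m = 0}.ncard =
      {m | knuthQuartic n a m = 0}.ncard := by
  have hT1 : absTrace n ((a ^ 4 + a ^ 2) * 1) = 0 := by
    rw [mul_one, map_add, show a ^ 4 = (a ^ 2) ^ 2 by ring, absTrace_sq_of_card hF,
      CharTwo.add_self_eq_zero]
  rw [← ncard_setOf_add_eq_zero_eq_ncard_setOf_eq_zero (knuthQuartic n a)
    ((absTrace n).comp (AddMonoidHom.mulLeft (a ^ 4 + a ^ 2))) (knuthQuartic_one n a) hT1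
    fun x => absTrace_eq_zero_or_one hF _]
  congr 1
  ext m
  simp only [Set.mem_ofPred_eq, AddMonoidHom.comp_apply, AddMonoidHom.coe_mulLeft,
    ← knuthMul_sqrt_add_add_pow_four hn hF, pow_eq_zero_iff four_ne_zero]

theorem ncard_setOf_knuthQuartic_eq_zero_of_absTrace_eq_one (hn : Odd n)
    (hF : Fintype.card F = 2 ^ n) {a : F} (ha1 : a ≠ 1) (ht : absTrace n a = 1) :
    {m | knuthQuartic n a m = 0}.ncard = 2 := by
  have ha1' : (a + 1) ^ 4 ≠ 0 := pow_ne_zero 4 fun h => ha1 (CharTwo.add_eq_zero.1 h)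
  have hb : ((a + 1) ^ 4)⁻¹ ≠ 0 := inv_ne_zero ha1'
  have htr : absTrace n ((a + 1) ^ 4)⁻¹⁻¹ = 0 := by
    rw [inv_inv, show (a + 1) ^ 4 = ((a + 1) ^ 2) ^ 2 by ring, absTrace_sq_of_card hF,
      absTrace_sq_of_card hF, map_add, ht, absTrace_one hn, CharTwo.add_self_eq_zero]
  obtain ⟨x₀, hx₀⟩ := exists_cubic_root hn hF hb htr
  have hx₀0 : x₀ ≠ 0 := by rintro rfl; simp [hb] at hx₀
  have hP : ∀ m, knuthQuartic n a m = (a + 1) ^ 4 * (m * (m ^ 3 + m + ((a + 1) ^ 4)⁻¹)) := by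
    intro m
    rw [knuthQuartic_apply, ht]
    linear_combination (norm := (ring_nf; reduce_mod_char!)) m * mul_inv_cancel₀ ha1'
  rw [show {m | knuthQuartic n a m = 0} = {0, x₀} from ?_, Set.ncard_pair hx₀0.symm]
  ext m
  simp only [Set.mem_ofPred_eq, hP, mul_eq_zero, ha1', false_or, Set.mem_insert_iff,
    Set.mem_singleton_iff]
  exact or_congr_right ⟨fun h => cubic_root_unique hn hF hb htr h hx₀, fun h => h ▸ hx₀⟩

end KnuthField

theorem line_hyperoval_type_b_general
    (n : ℕ) (hn : Odd n)
    {F : Type*} [Field F] [Fintype F] (hF : Fintype.card F = 2 ^ n)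
    (Tr : F → F) (hTr : ∀ x : F, Tr x = ∑ i ∈ Finset.range n, x ^ 2 ^ i)
    (smul : F → F → F)
    (hsmul : ∀ x y : F, smul x y = x * y + Tr x * y ^ 2 ^ (n - 1) + Tr (x ^ 2 * y)) :
    ∀ a : F,
      ((a = 0 ∨ a = 1) →
        ({m : F | smul a (m ^ 2 ^ (n - 1) + m) + m = 0}).ncard = 1) ∧
      (a ≠ 0 → a ≠ 1 →
        ({m : F | smul a (m ^ 2 ^ (n - 1) + m) + m = 0}).ncard = 2) := by
  have : CharP F 2 := charP_two_of_card_eq_two_pow hn.pos.ne' hF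
  obtain rfl : Tr = absTrace n := funext hTr
  obtain rfl : smul = knuthMul n := funext fun x => funext (hsmul x)
  intro a
  rw [ncard_setOf_knuthMul_sqrt_add_add_eq_zero hn.pos.ne' hF]
  refine ⟨fun ha => ?_, fun ha0 ha1 => ?_⟩
  · simp [knuthQuartic_eq_zero_iff_of_eq_zero_or_one hn ha]
  · rcases absTrace_eq_zero_or_one hF a with ht | ht
    · exact ncard_setOf_knuthQuartic_eq_zero_of_absTrace_eq_zero ha0 ha1 ht
    · exact ncard_setOf_knuthQuartic_eq_zero_of_absTrace_eq_one hn hF ha1 ht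

/-- Corollary 3.5: in the symplectic Knuth presemifield plane `Π(K_n^{td})`, the set of
lines `{l_{√m + m, m} : m ∈ F_q} ∪ {l_0, l_1}` is a line hyperoval.  Analytically: for
`a ∈ F_q` the equation `a ∘ (m^{2^{n-1}} + m) + m = 0` has exactly `1` solution when
`a ∈ {0,1}` and exactly `2` solutions when `a ∉ {0,1}`. -/
theorem line_hyperoval_type_b
    (n : ℕ) (hn : Odd n) (hn0 : 0 < n)
    {F : Type*} [Field F] [Fintype F] (hF : Fintype.card F = 2 ^ n)
    (Tr : F → F) (hTr : ∀ x : F, Tr x = ∑ i ∈ Finset.range n, x ^ 2 ^ i)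
    (smul : F → F → F)
    (hsmul : ∀ x y : F, smul x y = x * y + Tr x * y ^ 2 ^ (n - 1) + Tr (x ^ 2 * y)) :
    ∀ a : F,
      ((a = 0 ∨ a = 1) →
        ({m : F | smul a (m ^ 2 ^ (n - 1) + m) + m = 0}).ncard = 1) ∧
      (a ≠ 0 → a ≠ 1 →
        ({m : F | smul a (m ^ 2 ^ (n - 1) + m) + m = 0}).ncard = 2) :=
  line_hyperoval_type_b_general n hn hF Tr hTr smul hsmul
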